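/- For every pure two-qubit state ρ = |φ⟩⟨φ|, the fidelity equals (1 + C)/2, where C is the concurrence of |φ⟩; i.e., the upper bound F ≤ (1+C)/2 is saturated by all pure states. -/

import Mathlib

open Matrix Complex
open scoped ComplexOrder

noncomputable section

def pauli1 : Matrix (Fin 2) (Fin 2) ℂ := !![0, 1; 1, 0]
def pauli2 : Matrix (Fin 2) (Fin 2) ℂ := !![0, -Complex.I; Complex.I, 0]
def pauli3 : Matrix (Fin 2) (Fin 2) ℂ := !![1, 0; 0, -1]
def pauli : Fin 3 → Matrix (Fin 2) (Fin 2) ℂ := ![pauli1, pauli2, pauli3]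

/-- first-qubit index of a composite index, basis order |00⟩,|01⟩,|10⟩,|11⟩ -/
def q1 (i : Fin 4) : Fin 2 := ⟨i.val / 2, by omega⟩
def q2 (i : Fin 4) : Fin 2 := ⟨i.val % 2, by omega⟩
def pairIdx (a b : Fin 2) : Fin 4 := ⟨2 * a.val + b.val, by omega⟩

/-- Kronecker product of two 2×2 matrices as a 4×4 matrix. -/
def kron (A B : Matrix (Fin 2) (Fin 2) ℂ) : Matrix (Fin 4) (Fin 4) ℂ :=
  fun i j => A (q1 i) (q1 j) * B (q2 i) (q2 j)

/-- Partial transpose on the second qubit. -/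
def ptranspose (ρ : Matrix (Fin 4) (Fin 4) ℂ) : Matrix (Fin 4) (Fin 4) ℂ :=
  fun i j => ρ (pairIdx (q1 i) (q2 j)) (pairIdx (q1 j) (q2 i))

/-- the Bell state (|00⟩+|11⟩)/√2 -/
def bell : Fin 4 → ℂ := ![1 / Real.sqrt 2, 0, 0, 1 / Real.sqrt 2]

/-- ⟨ψ|ρ|ψ⟩ (real part) -/
def overlap (ρ : Matrix (Fin 4) (Fin 4) ℂ) (ψ : Fin 4 → ℂ) : ℝ :=
  (star ψ ⬝ᵥ ρ *ᵥ ψ).re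

/-- ψ is maximally entangled: ψ = (U_A ⊗ U_B)(|00⟩+|11⟩)/√2 with U_A, U_B ∈ SU(2). -/
def IsMaxEnt (ψ : Fin 4 → ℂ) : Prop :=
  ∃ UA UB : Matrix (Fin 2) (Fin 2) ℂ,
    UA ∈ Matrix.unitaryGroup (Fin 2) ℂ ∧ UB ∈ Matrix.unitaryGroup (Fin 2) ℂ ∧
    UA.det = 1 ∧ UB.det = 1 ∧ ψ = (kron UA UB) *ᵥ bell

/-- fidelity / maximal singlet fraction -/
def fid (ρ : Matrix (Fin 4) (Fin 4) ℂ) : ℝ :=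
  sSup {x : ℝ | ∃ ψ, IsMaxEnt ψ ∧ x = overlap ρ ψ}

/-- negativity N(ρ) = max(0, -2 λ_min(ρ^Γ)) -/
def negativity (ρ : Matrix (Fin 4) (Fin 4) ℂ) : ℝ :=
  max 0 (-2 * sInf {t : ℝ | (t : ℂ) ∈ spectrum ℂ (ptranspose ρ)})

def spinFlip : Matrix (Fin 4) (Fin 4) ℂ := kron pauli2 pauli2

def concMat (ρ : Matrix (Fin 4) (Fin 4) ℂ) : Matrix (Fin 4) (Fin 4) ℂ :=
  ρ * spinFlip * ρ.map (starRingEnd ℂ) * spinFlip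

/-- the λᵢ of Wootters' formula: square roots of the eigenvalues (with multiplicity)
of ρ (σy⊗σy) ρ̄ (σy⊗σy); these eigenvalues are real and nonnegative. -/
def concRoots (ρ : Matrix (Fin 4) (Fin 4) ℂ) : Multiset ℝ :=
  (concMat ρ).charpoly.roots.map (fun z => Real.sqrt z.re)

/-- concurrence C = max(0, λ₁-λ₂-λ₃-λ₄) = max(0, 2 max λᵢ - ∑ λᵢ) -/
def concurrence (ρ : Matrix (Fin 4) (Fin 4) ℂ) : ℝ :=
  max 0 (2 * (concRoots ρ).fold max 0 - (concRoots ρ).sum)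

/-! ### Auxiliary lemmas -/

private lemma cs4 (x1 x2 x3 x4 y1 y2 y3 y4 : ℝ) :
    (x1*y1+x2*y2+x3*y3+x4*y4)^2 ≤ (x1^2+x2^2+x3^2+x4^2)*(y1^2+y2^2+y3^2+y4^2) := by
  nlinarith [sq_nonneg (x1*y2-x2*y1), sq_nonneg (x1*y3-x3*y1), sq_nonneg (x1*y4-x4*y1),
    sq_nonneg (x2*y3-x3*y2), sq_nonneg (x2*y4-x4*y2), sq_nonneg (x3*y4-x4*y3)]

private lemma re_sq (w : ℂ) : w.re^2 = ((w^2).re + Complex.normSq w)/2 := by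
  simp [pow_two, Complex.mul_re, Complex.normSq_apply]

private lemma repr4 (α β a b c d : ℂ) :
    α*a + (starRingEnd ℂ α)*d + β*c - (starRingEnd ℂ β)*b
      = (α.re:ℂ)*(a+d) + (α.im:ℂ)*(Complex.I*(a-d)) + (β.re:ℂ)*(c-b) + (β.im:ℂ)*(Complex.I*(b+c)) := by
  apply Complex.ext <;> simp <;> ring

private lemma zsq4 (a b c d : ℂ) :
    (a+d)^2 + (Complex.I*(a-d))^2 + (c-b)^2 + (Complex.I*(b+c))^2 = 4*(a*d - b*c) := by
  ring_nf; rw [Complex.I_sq]; ring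

private lemma znorm4 (a b c d : ℂ) :
    Complex.normSq (a+d) + Complex.normSq (Complex.I*(a-d)) + Complex.normSq (c-b)
      + Complex.normSq (Complex.I*(b+c))
    = 2*(Complex.normSq a + Complex.normSq b + Complex.normSq c + Complex.normSq d) := by
  simp only [Complex.normSq_apply, Complex.add_re, Complex.add_im, Complex.sub_re,
    Complex.sub_im, Complex.mul_re, Complex.mul_im, Complex.I_re, Complex.I_im]
  ring

private lemma core_ineq (α β a b c d : ℂ)
    (hαβ : Complex.normSq α + Complex.normSq β = 1) :
    Complex.normSq (α*a + (starRingEnd ℂ α)*d + β*c - (starRingEnd ℂ β)*b)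
      ≤ (Complex.normSq a + Complex.normSq b + Complex.normSq c + Complex.normSq d)
        + 2 * ‖a*d - b*c‖ := by
  set z1 : ℂ := a+d with hz1
  set z2 : ℂ := Complex.I*(a-d) with hz2
  set z3 : ℂ := c-b with hz3
  set z4 : ℂ := Complex.I*(b+c) with hz4
  set N : ℝ := Complex.normSq a + Complex.normSq b + Complex.normSq c + Complex.normSq d with hN
  set f : ℂ := α*a + (starRingEnd ℂ α)*d + β*c - (starRingEnd ℂ β)*b with hfdef
  have hD : (0:ℝ) ≤ ‖a*d - b*c‖ := norm_nonneg _
  have hNnn : (0:ℝ) ≤ N := by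
    have := Complex.normSq_nonneg a; have := Complex.normSq_nonneg b
    have := Complex.normSq_nonneg c; have := Complex.normSq_nonneg d
    rw [hN]; linarith
  rcases eq_or_ne f 0 with hf0 | hf0
  · rw [hf0, Complex.normSq_zero]; linarith
  have hzsq : z1^2+z2^2+z3^2+z4^2 = 4*(a*d - b*c) := by
    rw [hz1, hz2, hz3, hz4]; ring_nf; rw [Complex.I_sq]; ring
  have hznorm : Complex.normSq z1 + Complex.normSq z2 + Complex.normSq z3 + Complex.normSq z4 = 2*N := by
    rw [hz1, hz2, hz3, hz4, hN]
    simp only [Complex.normSq_apply, Complex.add_re, Complex.add_im, Complex.sub_re,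
      Complex.sub_im, Complex.mul_re, Complex.mul_im, Complex.I_re, Complex.I_im]
    ring
  have hf : f = (α.re:ℂ)*z1 + (α.im:ℂ)*z2 + (β.re:ℂ)*z3 + (β.im:ℂ)*z4 := repr4 α β a b c d
  set u : ℂ := (starRingEnd ℂ) f / (‖f‖) with hu
  have habsf : (0:ℝ) < ‖f‖ := norm_pos_iff.mpr hf0
  have hne : ((‖f‖ : ℝ) : ℂ) ≠ 0 := by exact_mod_cast habsf.ne'
  have habsu : ‖u‖ = 1 := by
    rw [hu, norm_div]
    simp [Complex.norm_conj, Complex.norm_real, _root_.abs_of_nonneg habsf.le, div_self habsf.ne']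
  have huf : u * f = (‖f‖ : ℂ) := by
    rw [hu, div_mul_eq_mul_div, mul_comm, Complex.mul_conj, ← Complex.sq_norm]
    push_cast
    rw [pow_two, mul_div_assoc, div_self hne, mul_one]
  have huf2 : u * f = (α.re:ℂ)*(u*z1) + (α.im:ℂ)*(u*z2) + (β.re:ℂ)*(u*z3) + (β.im:ℂ)*(u*z4) := by
    rw [hf]; ring
  have hre : ‖f‖ = α.re*(u*z1).re + α.im*(u*z2).re + β.re*(u*z3).re + β.im*(u*z4).re := by
    have h0 : ((‖f‖ : ℂ)).re = ‖f‖ := by simp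
    rw [← h0, ← huf, huf2]
    simp only [Complex.add_re, Complex.re_ofReal_mul]
  have hysum : (u*z1).re^2+(u*z2).re^2+(u*z3).re^2+(u*z4).re^2
      ≤ N + 2*‖a*d-b*c‖ := by
    have h1 : (u*z1).re^2+(u*z2).re^2+(u*z3).re^2+(u*z4).re^2
        = ((((u*z1)^2 + (u*z2)^2 + (u*z3)^2 + (u*z4)^2).re)
           + (Complex.normSq (u*z1) + Complex.normSq (u*z2) + Complex.normSq (u*z3) + Complex.normSq (u*z4)))/2 := by
      rw [re_sq (u*z1), re_sq (u*z2), re_sq (u*z3), re_sq (u*z4)]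
      simp only [Complex.add_re]; ring
    have h2 : (u*z1)^2 + (u*z2)^2 + (u*z3)^2 + (u*z4)^2 = u^2 * (4*(a*d-b*c)) := by
      rw [← hzsq]; ring
    have h3 : Complex.normSq (u*z1) + Complex.normSq (u*z2) + Complex.normSq (u*z3) + Complex.normSq (u*z4) = 2*N := by
      simp only [Complex.normSq_mul]
      have hu1 : Complex.normSq u = 1 := by rw [← Complex.sq_norm, habsu]; norm_num
      rw [hu1]; simpa using hznorm
    have h4 : (u^2 * (4*(a*d-b*c))).re ≤ 4*‖a*d-b*c‖ := by
      calc (u^2 * (4*(a*d-b*c))).re ≤ ‖u^2 * (4*(a*d-b*c))‖ := Complex.re_le_norm _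
        _ = 4*‖a*d-b*c‖ := by
            rw [norm_mul, norm_pow, habsu]
            simp
    rw [h1, h2, h3]; linarith
  have hx : α.re^2+α.im^2+β.re^2+β.im^2 = 1 := by
    have h := hαβ
    simp only [Complex.normSq_apply] at h
    linear_combination h
  have hcs := cs4 α.re α.im β.re β.im (u*z1).re (u*z2).re (u*z3).re (u*z4).re
  rw [hx, one_mul] at hcs
  have hfsq : Complex.normSq f = (‖f‖)^2 := (Complex.sq_norm f).symm
  rw [hfsq, hre]
  calc (α.re*(u*z1).re + α.im*(u*z2).re + β.re*(u*z3).re + β.im*(u*z4).re)^2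
      ≤ (u*z1).re^2+(u*z2).re^2+(u*z3).re^2+(u*z4).re^2 := hcs
    _ ≤ N + 2*‖a*d-b*c‖ := hysum

private lemma sqrt_phase (g : ℂ) :
    ∃ μ : ℂ, Complex.normSq μ = 1 ∧ μ^2 * g = (‖g‖ : ℂ) := by
  rcases eq_or_ne g 0 with h | h
  · exact ⟨1, by simp, by simp [h]⟩
  · have hD : 0 < ‖g‖ := norm_pos_iff.mpr h
    obtain ⟨μ, hμ⟩ := IsAlgClosed.exists_pow_nat_eq ((starRingEnd ℂ) g / (‖g‖ : ℂ)) zero_lt_two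
    have habsw : ‖(starRingEnd ℂ) g / (‖g‖ : ℂ)‖ = 1 := by
      rw [norm_div]
      simp [Complex.norm_conj, Complex.norm_real, _root_.abs_of_nonneg hD.le, div_self hD.ne']
    have h1 : Complex.normSq μ = 1 := by
      have h2 : (‖μ‖)^2 = 1 := by
        rw [← norm_pow, hμ, habsw]
      rw [← Complex.sq_norm, h2]
    refine ⟨μ, h1, ?_⟩
    rw [hμ, div_mul_eq_mul_div, mul_comm, Complex.mul_conj, ← Complex.sq_norm]
    have hne : ((‖g‖ : ℝ) : ℂ) ≠ 0 := by exact_mod_cast hD.ne'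
    push_cast
    rw [pow_two, mul_div_assoc, div_self hne, mul_one]

private lemma core_exists (a b c d : ℂ)
    (hn : Complex.normSq a + Complex.normSq b + Complex.normSq c + Complex.normSq d = 1) :
    ∃ α β : ℂ, Complex.normSq α + Complex.normSq β = 1 ∧
      Complex.normSq (α*a + (starRingEnd ℂ α)*d + β*c - (starRingEnd ℂ β)*b)
        = 1 + 2 * ‖a*d - b*c‖ := by
  obtain ⟨μ, hμ1, hμ2⟩ := sqrt_phase (a*d - b*c)
  set D : ℝ := ‖a*d - b*c‖ with hDdef
  have hD0 : 0 ≤ D := norm_nonneg _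
  have h12 : (0:ℝ) < 1 + 2*D := by linarith
  set z1 : ℂ := a+d with hz1
  set z2 : ℂ := Complex.I*(a-d) with hz2
  set z3 : ℂ := c-b with hz3
  set z4 : ℂ := Complex.I*(b+c) with hz4
  set w1 : ℂ := μ * z1 with hw1
  set w2 : ℂ := μ * z2 with hw2
  set w3 : ℂ := μ * z3 with hw3
  set w4 : ℂ := μ * z4 with hw4
  have hwsq : w1^2+w2^2+w3^2+w4^2 = ((4*D : ℝ) : ℂ) := by
    rw [hw1, hw2, hw3, hw4]
    have : (μ*z1)^2+(μ*z2)^2+(μ*z3)^2+(μ*z4)^2 = μ^2 * (z1^2+z2^2+z3^2+z4^2) := by ring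
    rw [this, hz1, hz2, hz3, hz4, zsq4, ← mul_assoc, mul_comm (μ^2) 4, mul_assoc, hμ2]
    push_cast; ring
  have hre4 : (w1^2).re + (w2^2).re + (w3^2).re + (w4^2).re = 4*D := by
    have := congrArg Complex.re hwsq
    simpa using this
  have him4 : w1.re*w1.im + w2.re*w2.im + w3.re*w3.im + w4.re*w4.im = 0 := by
    have := congrArg Complex.im hwsq
    simp only [Complex.add_im, Complex.ofReal_im, pow_two, Complex.mul_im] at this
    linarith
  have hnorm4 : Complex.normSq w1 + Complex.normSq w2 + Complex.normSq w3 + Complex.normSq w4 = 2 := by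
    rw [hw1, hw2, hw3, hw4]
    simp only [Complex.normSq_mul, hμ1, one_mul]
    rw [hz1, hz2, hz3, hz4, znorm4, hn]; norm_num
  have hresum : w1.re^2 + w2.re^2 + w3.re^2 + w4.re^2 = 1 + 2*D := by
    rw [re_sq w1, re_sq w2, re_sq w3, re_sq w4]
    linarith
  set r : ℝ := Real.sqrt (1+2*D) with hrdef
  have hr2 : r^2 = 1+2*D := Real.sq_sqrt h12.le
  have hrpos : 0 < r := Real.sqrt_pos.mpr h12
  set x1 : ℝ := w1.re / r with hx1
  set x2 : ℝ := w2.re / r with hx2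
  set x3 : ℝ := w3.re / r with hx3
  set x4 : ℝ := w4.re / r with hx4
  refine ⟨⟨x1, x2⟩, ⟨x3, x4⟩, ?_, ?_⟩
  · rw [Complex.normSq_mk, Complex.normSq_mk, hx1, hx2, hx3, hx4]
    have key : w1.re/r*(w1.re/r) + w2.re/r*(w2.re/r) + (w3.re/r*(w3.re/r) + w4.re/r*(w4.re/r))
        = (w1.re^2+w2.re^2+w3.re^2+w4.re^2)/r^2 := by
      field_simp; ring
    rw [key, hresum, hr2, div_self h12.ne']
  · have hre : (⟨x1,x2⟩ : ℂ).re = x1 := rfl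
    have him : (⟨x1,x2⟩ : ℂ).im = x2 := rfl
    have hre' : (⟨x3,x4⟩ : ℂ).re = x3 := rfl
    have him' : (⟨x3,x4⟩ : ℂ).im = x4 := rfl
    rw [repr4, hre, him, hre', him']
    have hc : (starRingEnd ℂ) μ * μ = 1 := by
      rw [mul_comm, Complex.mul_conj, hμ1]; norm_num
    have hz1' : a+d = (starRingEnd ℂ) μ * w1 := by
      rw [hw1, ← mul_assoc, hc, one_mul, hz1]
    have hz2' : Complex.I*(a-d) = (starRingEnd ℂ) μ * w2 := by
      rw [hw2, ← mul_assoc, hc, one_mul, hz2]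
    have hz3' : c-b = (starRingEnd ℂ) μ * w3 := by
      rw [hw3, ← mul_assoc, hc, one_mul, hz3]
    have hz4' : Complex.I*(b+c) = (starRingEnd ℂ) μ * w4 := by
      rw [hw4, ← mul_assoc, hc, one_mul, hz4]
    rw [hz1', hz2', hz3', hz4']
    have hsumw : (w1.re:ℂ)*w1 + (w2.re:ℂ)*w2 + (w3.re:ℂ)*w3 + (w4.re:ℂ)*w4 = ((1+2*D : ℝ) : ℂ) := by
      apply Complex.ext
      · simp only [Complex.add_re, Complex.re_ofReal_mul, Complex.ofReal_re]
        rw [← hresum]; ring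
      · simp only [Complex.add_im, Complex.im_ofReal_mul, Complex.ofReal_im]
        rw [← him4]
    have hstep : (x1:ℂ)*((starRingEnd ℂ) μ * w1) + (x2:ℂ)*((starRingEnd ℂ) μ * w2)
        + (x3:ℂ)*((starRingEnd ℂ) μ * w3) + (x4:ℂ)*((starRingEnd ℂ) μ * w4)
        = ((r:ℝ):ℂ)⁻¹ * ((starRingEnd ℂ) μ) * ((w1.re:ℂ)*w1 + (w2.re:ℂ)*w2 + (w3.re:ℂ)*w3 + (w4.re:ℂ)*w4) := by
      rw [hx1, hx2, hx3, hx4]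
      push_cast
      field_simp
    rw [hstep, hsumw]
    rw [Complex.normSq_mul, Complex.normSq_mul, Complex.normSq_conj, hμ1,
      Complex.normSq_inv, Complex.normSq_ofReal, Complex.normSq_ofReal]
    have hrr : r * r = 1 + 2*D := by rw [← hr2]; ring
    rw [hrr]
    field_simp

@[simp] private lemma q1_0 : q1 0 = 0 := rfl
@[simp] private lemma q1_1 : q1 1 = 0 := rfl
@[simp] private lemma q1_2 : q1 2 = 1 := rfl
@[simp] private lemma q1_3 : q1 3 = 1 := rfl
@[simp] private lemma q2_0 : q2 0 = 0 := rfl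
@[simp] private lemma q2_1 : q2 1 = 1 := rfl
@[simp] private lemma q2_2 : q2 2 = 0 := rfl
@[simp] private lemma q2_3 : q2 3 = 1 := rfl

private lemma psi_dot (UA UB : Matrix (Fin 2) (Fin 2) ℂ) (φ : Fin 4 → ℂ) :
    star ((kron UA UB) *ᵥ bell) ⬝ᵥ φ
      = ((Real.sqrt 2 : ℝ) : ℂ)⁻¹ *
        ( (starRingEnd ℂ) (UA 0 0 * UB 0 0 + UA 0 1 * UB 0 1) * φ 0
        + (starRingEnd ℂ) (UA 0 0 * UB 1 0 + UA 0 1 * UB 1 1) * φ 1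
        + (starRingEnd ℂ) (UA 1 0 * UB 0 0 + UA 1 1 * UB 0 1) * φ 2
        + (starRingEnd ℂ) (UA 1 0 * UB 1 0 + UA 1 1 * UB 1 1) * φ 3) := by
  simp [dotProduct, mulVec, kron, bell, Fin.sum_univ_four, Pi.star_apply, map_add, _root_.map_mul,
    Complex.conj_ofReal, one_div]
  ring

private lemma overlap_eq (φ ψ : Fin 4 → ℂ) :
    overlap (vecMulVec φ (star φ)) ψ = Complex.normSq (star ψ ⬝ᵥ φ) := by
  unfold overlap
  have h1 : (vecMulVec φ (star φ)) *ᵥ ψ = fun i => φ i * (star φ ⬝ᵥ ψ) := by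
    ext i
    simp [vecMulVec, mulVec, dotProduct, Finset.mul_sum, mul_assoc]
  rw [h1]
  have h2 : star ψ ⬝ᵥ (fun i => φ i * (star φ ⬝ᵥ ψ)) = (star ψ ⬝ᵥ φ) * (star φ ⬝ᵥ ψ) := by
    simp [dotProduct, Finset.sum_mul, mul_assoc]
  rw [h2]
  have h3 : star φ ⬝ᵥ ψ = (starRingEnd ℂ) (star ψ ⬝ᵥ φ) := by
    simp [dotProduct, map_sum, mul_comm]
  rw [h3, Complex.mul_conj]
  simp

private lemma norm4 (φ : Fin 4 → ℂ) (hφ : star φ ⬝ᵥ φ = 1) :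
    Complex.normSq (φ 0) + Complex.normSq (φ 1) + Complex.normSq (φ 2) + Complex.normSq (φ 3) = 1 := by
  have h : ((Complex.normSq (φ 0) + Complex.normSq (φ 1) + Complex.normSq (φ 2) + Complex.normSq (φ 3) : ℝ) : ℂ) = 1 := by
    rw [← hφ]
    simp [dotProduct, Fin.sum_univ_four, Pi.star_apply, mul_comm, Complex.mul_conj]
  exact_mod_cast h

private lemma su2_structure (V : Matrix (Fin 2) (Fin 2) ℂ)
    (hV : V ∈ Matrix.unitaryGroup (Fin 2) ℂ) (hdet : V.det = 1) :
    V 1 1 = (starRingEnd ℂ) (V 0 0) ∧ V 1 0 = -((starRingEnd ℂ) (V 0 1)) ∧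
    Complex.normSq (V 0 0) + Complex.normSq (V 0 1) = 1 := by
  have h1 : star V * V = 1 := (Matrix.mem_unitaryGroup_iff'.mp hV)
  have h2 : V * star V = 1 := (Matrix.mem_unitaryGroup_iff.mp hV)
  have hadj : V * adjugate V = 1 := by rw [Matrix.mul_adjugate, hdet]; simp
  have hsta : star V = adjugate V := by
    calc star V = star V * (V * adjugate V) := by rw [hadj, mul_one]
      _ = (star V * V) * adjugate V := by rw [mul_assoc]
      _ = adjugate V := by rw [h1, one_mul]
  rw [Matrix.adjugate_fin_two] at hsta
  have e00 : (starRingEnd ℂ) (V 0 0) = V 1 1 := by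
    have := congrFun (congrFun hsta 0) 0
    simpa [Matrix.conjTranspose_apply] using this
  have e01 : (starRingEnd ℂ) (V 1 0) = -(V 0 1) := by
    have := congrFun (congrFun hsta 0) 1
    simpa [Matrix.conjTranspose_apply] using this
  refine ⟨e00.symm, ?_, ?_⟩
  · have := congrArg (starRingEnd ℂ) e01
    simpa using this
  · have := congrFun (congrFun h2 0) 0
    simp [Matrix.mul_apply, Fin.sum_univ_two, Matrix.conjTranspose_apply, Matrix.one_apply,
      Complex.mul_conj] at this
    exact_mod_cast this

private lemma sqrt2_normSq : Complex.normSq ((Real.sqrt 2 : ℝ) : ℂ)⁻¹ = 2⁻¹ := by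
  rw [Complex.normSq_inv, Complex.normSq_ofReal, Real.mul_self_sqrt (by norm_num : (0:ℝ) ≤ 2)]

/-- For a pure state ρ = |φ⟩⟨φ| with φ = a|00⟩+b|01⟩+c|10⟩+d|11⟩ a unit vector, the
fidelity equals (1+C)/2 with C = 2|ad - bc| the concurrence of φ. -/
theorem fidelity_pure_state
    (φ : Fin 4 → ℂ) (hφ : star φ ⬝ᵥ φ = 1) :
    fid (Matrix.vecMulVec φ (star φ)) =
      (1 + 2 * ‖φ 0 * φ 3 - φ 1 * φ 2‖) / 2 := by
  have hn := norm4 φ hφ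
  set D : ℝ := ‖φ 0 * φ 3 - φ 1 * φ 2‖ with hDdef
  have hD0 : 0 ≤ D := norm_nonneg _
  set S : Set ℝ := {x : ℝ | ∃ ψ, IsMaxEnt ψ ∧ x = overlap (Matrix.vecMulVec φ (star φ)) ψ} with hSdef
  have hub : ∀ x ∈ S, x ≤ (1 + 2*D)/2 := by
    rintro x ⟨ψ, ⟨UA, UB, hUA, hUB, hdA, hdB, hψeq⟩, rfl⟩
    rw [hψeq, overlap_eq, psi_dot]
    set V : Matrix (Fin 2) (Fin 2) ℂ := ((UBᴴ)ᵀ) * (UAᴴ) with hVdef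
    have hVmem : V ∈ Matrix.unitaryGroup (Fin 2) ℂ := by
      rw [Matrix.mem_unitaryGroup_iff]
      have hstarV : star V = UA * UBᵀ := by
        rw [hVdef]
        rw [Matrix.star_eq_conjTranspose, Matrix.conjTranspose_mul,
          Matrix.conjTranspose_conjTranspose]
        congr 1
        ext i j
        simp [Matrix.conjTranspose_apply, Matrix.transpose_apply]
      rw [hstarV, hVdef]
      have hA : UAᴴ * UA = 1 := by
        rw [← Matrix.star_eq_conjTranspose]
        exact Matrix.mem_unitaryGroup_iff'.mp hUA
      have hB : UB * UBᴴ = 1 := by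
        rw [← Matrix.star_eq_conjTranspose]
        exact Matrix.mem_unitaryGroup_iff.mp hUB
      calc ((UBᴴ)ᵀ) * (UAᴴ) * (UA * UBᵀ) = ((UBᴴ)ᵀ) * (UAᴴ * UA) * UBᵀ := by
            rw [mul_assoc, mul_assoc, mul_assoc]
        _ = ((UBᴴ)ᵀ) * UBᵀ := by rw [hA, mul_one]
        _ = (UB * UBᴴ)ᵀ := by rw [Matrix.transpose_mul]
        _ = 1 := by rw [hB, Matrix.transpose_one]
    have hVdet : V.det = 1 := by
      rw [hVdef, Matrix.det_mul, Matrix.det_transpose, Matrix.det_conjTranspose,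
        Matrix.det_conjTranspose, hdA, hdB]
      simp
    obtain ⟨s1, s2, s3⟩ := su2_structure V hVmem hVdet
    have hV00 : V 0 0 = (starRingEnd ℂ) (UA 0 0 * UB 0 0 + UA 0 1 * UB 0 1) := by
      rw [hVdef]
      simp [Matrix.mul_apply, Fin.sum_univ_two, Matrix.transpose_apply, Matrix.conjTranspose_apply]
      ring
    have hV10 : V 1 0 = (starRingEnd ℂ) (UA 0 0 * UB 1 0 + UA 0 1 * UB 1 1) := by
      rw [hVdef]
      simp [Matrix.mul_apply, Fin.sum_univ_two, Matrix.transpose_apply, Matrix.conjTranspose_apply]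
      ring
    have hV01 : V 0 1 = (starRingEnd ℂ) (UA 1 0 * UB 0 0 + UA 1 1 * UB 0 1) := by
      rw [hVdef]
      simp [Matrix.mul_apply, Fin.sum_univ_two, Matrix.transpose_apply, Matrix.conjTranspose_apply]
      ring
    have hV11 : V 1 1 = (starRingEnd ℂ) (UA 1 0 * UB 1 0 + UA 1 1 * UB 1 1) := by
      rw [hVdef]
      simp [Matrix.mul_apply, Fin.sum_univ_two, Matrix.transpose_apply, Matrix.conjTranspose_apply]
      ring
    rw [← hV00, ← hV10, ← hV01, ← hV11]
    rw [Complex.normSq_mul, sqrt2_normSq]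
    have harg : V 0 0 * φ 0 + V 1 0 * φ 1 + V 0 1 * φ 2 + V 1 1 * φ 3
        = V 0 0 * φ 0 + (starRingEnd ℂ) (V 0 0) * φ 3 + V 0 1 * φ 2
          - (starRingEnd ℂ) (V 0 1) * φ 1 := by
      rw [s1, s2]; ring
    rw [harg]
    have hb := core_ineq (V 0 0) (V 0 1) (φ 0) (φ 1) (φ 2) (φ 3) s3
    rw [hn] at hb
    rw [← hDdef] at hb
    nlinarith [hb]
  have hmem : (1 + 2*D)/2 ∈ S := by
    obtain ⟨α, β, hαβ, hach⟩ := core_exists (φ 0) (φ 1) (φ 2) (φ 3) hn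
    have hC : α * (starRingEnd ℂ) α + β * (starRingEnd ℂ) β = 1 := by
      rw [Complex.mul_conj, Complex.mul_conj]
      exact_mod_cast congrArg (fun t : ℝ => (t : ℂ)) hαβ
    set UA : Matrix (Fin 2) (Fin 2) ℂ := !![(starRingEnd ℂ) α, -β; (starRingEnd ℂ) β, α] with hUAdef
    have hUAmem : UA ∈ Matrix.unitaryGroup (Fin 2) ℂ := by
      rw [Matrix.mem_unitaryGroup_iff]
      ext i j
      fin_cases i <;> fin_cases j <;>
        simp [hUAdef, Matrix.mul_apply, Fin.sum_univ_two, Matrix.conjTranspose_apply,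
          Matrix.one_apply] <;>
        (first | ring1 | linear_combination hC)
    have hUAdet : UA.det = 1 := by
      rw [hUAdef, Matrix.det_fin_two_of]
      linear_combination hC
    have h1mem : (1 : Matrix (Fin 2) (Fin 2) ℂ) ∈ Matrix.unitaryGroup (Fin 2) ℂ := by
      rw [Matrix.mem_unitaryGroup_iff]; simp
    refine ⟨(kron UA 1) *ᵥ bell, ⟨UA, 1, hUAmem, h1mem, hUAdet, Matrix.det_one, rfl⟩, ?_⟩
    rw [overlap_eq, psi_dot]
    rw [Complex.normSq_mul, sqrt2_normSq]
    have h1e : ∀ i : Fin 2, (1 : Matrix (Fin 2) (Fin 2) ℂ) i i = 1 := fun i => Matrix.one_apply_eq i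
    have harg : (starRingEnd ℂ) (UA 0 0 * (1 : Matrix (Fin 2) (Fin 2) ℂ) 0 0 + UA 0 1 * (1 : Matrix (Fin 2) (Fin 2) ℂ) 0 1) * φ 0
        + (starRingEnd ℂ) (UA 0 0 * (1 : Matrix (Fin 2) (Fin 2) ℂ) 1 0 + UA 0 1 * (1 : Matrix (Fin 2) (Fin 2) ℂ) 1 1) * φ 1
        + (starRingEnd ℂ) (UA 1 0 * (1 : Matrix (Fin 2) (Fin 2) ℂ) 0 0 + UA 1 1 * (1 : Matrix (Fin 2) (Fin 2) ℂ) 0 1) * φ 2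
        + (starRingEnd ℂ) (UA 1 0 * (1 : Matrix (Fin 2) (Fin 2) ℂ) 1 0 + UA 1 1 * (1 : Matrix (Fin 2) (Fin 2) ℂ) 1 1) * φ 3
        = α*(φ 0) + (starRingEnd ℂ) α*(φ 3) + β*(φ 2) - (starRingEnd ℂ) β*(φ 1) := by
      simp [hUAdef, Matrix.one_apply]
      ring
    rw [harg, hach, ← hDdef]
    ring
  have hSne : S.Nonempty := ⟨(1 + 2*D)/2, hmem⟩
  have hbdd : BddAbove S := ⟨(1 + 2*D)/2, fun x hx => hub x hx⟩
  have : fid (Matrix.vecMulVec φ (star φ)) = sSup S := rfl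
  rw [this]
  exact le_antisymm (csSup_le hSne hub) (le_csSup hbdd hmem)
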